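/- arXiv:1007.0690 — 12 statements merged into one kernel-verified Lean document; each statement's English description precedes it below -/
import Mathlib

section
/- If h is an earliest transiting occurrence of an N-node serial episode α in an event sequence, and h' is any occurrence of α with h <⋆ h' in the lexicographic order on occurrences, then h(v_i) ≤ h'(v_i) for all i = 1,...,N. -/
variable {A : Type}

/-- An occurrence of the (N+1)-node serial episode `α` in the event sequence
`E` (of length `n`): a strictly increasing index map matching the event-types. -/
def IsOcc (E : ℕ → A) (n : ℕ) {N : ℕ} (α : Fin (N+1) → A) (h : Fin (N+1) → ℕ) : Prop :=
  StrictMono h ∧ (∀ i, h i < n) ∧ (∀ i, E (h i) = α i)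

/-- Earliest transiting occurrence: each `h i.succ` is the least index after
`h i.castSucc` carrying event-type `α i.succ`. -/
def IsET (E : ℕ → A) (n : ℕ) {N : ℕ} (α : Fin (N+1) → A) (h : Fin (N+1) → ℕ) : Prop :=
  IsOcc E n α h ∧ ∀ (i : Fin N) (j : ℕ), h i.castSucc < j → E j = α i.succ → h i.succ ≤ j

/-- Lexicographic order on occurrences. -/
def OccLex {N : ℕ} (h1 h2 : Fin (N+1) → ℕ) : Prop :=
  ∃ i, (∀ k < i, h1 k = h2 k) ∧ h1 i < h2 i

/-- The window `[a, b]` contains an occurrence of `α`. -/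
def WindowHasOcc (E : ℕ → A) (n : ℕ) {N : ℕ} (α : Fin (N+1) → A) (a b : ℕ) : Prop :=
  ∃ h, IsOcc E n α h ∧ a ≤ h 0 ∧ h (Fin.last N) ≤ b

/-- `[a, b]` is a minimal window of `α`: it contains an occurrence and no
proper subwindow contains one. -/
def IsMinWindow (E : ℕ → A) (n : ℕ) {N : ℕ} (α : Fin (N+1) → A) (a b : ℕ) : Prop :=
  WindowHasOcc E n α a b ∧
    ∀ c d, a ≤ c → d ≤ b → (a < c ∨ d < b) → ¬ WindowHasOcc E n α c d

/-- A minimal occurrence: its window is a minimal window. -/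
def IsMinOcc (E : ℕ → A) (n : ℕ) {N : ℕ} (α : Fin (N+1) → A) (h : Fin (N+1) → ℕ) : Prop :=
  IsOcc E n α h ∧ IsMinWindow E n α (h 0) (h (Fin.last N))

/-- `h'` is the earliest transiting occurrence immediately following `h`
in the lexicographic enumeration of earliest transiting occurrences. -/
def NextET (E : ℕ → A) (n : ℕ) {N : ℕ} (α : Fin (N+1) → A) (h h' : Fin (N+1) → ℕ) : Prop :=
  IsET E n α h ∧ IsET E n α h' ∧ OccLex h h' ∧
    ¬ ∃ g, IsET E n α g ∧ OccLex h g ∧ OccLex g h'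

/-- `h1 <⋆ h2` are non-interleaved: `h2 (v_j) ≥ h1 (v_{j+1})` for all `j < N`. -/
def NonInterleaved {N : ℕ} (h1 h2 : Fin (N+1) → ℕ) : Prop :=
  ∀ i : Fin N, h1 i.succ ≤ h2 i.castSucc

/-- Non-overlapped occurrences: one ends strictly before the other begins. -/
def NonOverlapped {N : ℕ} (h1 h2 : Fin (N+1) → ℕ) : Prop :=
  h1 (Fin.last N) < h2 0 ∨ h2 (Fin.last N) < h1 0

theorem OccLex.apply_zero_le {N : ℕ} {h₁ h₂ : Fin (N+1) → ℕ} (hlex : OccLex h₁ h₂) :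
    h₁ 0 ≤ h₂ 0 := by
  obtain ⟨i, hagree, hlt⟩ := hlex
  rcases (Fin.zero_le i).eq_or_lt with rfl | hpos
  · exact hlt.le
  · exact (hagree 0 hpos).le

theorem IsET.le_of_apply_zero_le {E : ℕ → A} {n N : ℕ} {α : Fin (N+1) → A}
    {h h' : Fin (N+1) → ℕ} (hET : IsET E n α h) (hocc : IsOcc E n α h')
    (hzero : h 0 ≤ h' 0) (i : Fin (N+1)) : h i ≤ h' i := by
  induction i using Fin.induction with
  | zero => exact hzero
  | succ i ih =>
    exact hET.2 i (h' i.succ) (ih.trans_lt (hocc.1 i.castSucc_lt_succ)) (hocc.2.2 i.succ)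

theorem stmt0 (E : ℕ → A) (n : ℕ) {N : ℕ} (α : Fin (N+1) → A)
    (h h' : Fin (N+1) → ℕ) (hET : IsET E n α h) (hocc : IsOcc E n α h')
    (hlex : OccLex h h') : ∀ i, h i ≤ h' i :=
  hET.le_of_apply_zero_le hocc hlex.apply_zero_le
end

section
/- Let h_i^e denote the i-th earliest transiting occurrence of an N-node serial episode (ordered lexicographically). Then for i < j, h_i^e(v_k) ≤ h_j^e(v_k) for all k = 1,...,N; moreover h_i^e(v_1) < h_j^e(v_1). -/
variable {A : Type}

/-! An earliest transiting occurrence is the greedy occurrence from its first index, so it lies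
pointwise below every occurrence starting no earlier. Applied in both directions, this makes the
lexicographic order on earliest transiting occurrences the order of their first indices, and the
first one lies pointwise below the second. -/

theorem IsET.succ_le_of_castSucc_le {E : ℕ → A} {n N : ℕ} {α : Fin (N+1) → A}
    {h g : Fin (N+1) → ℕ} (hET : IsET E n α h) (hg : IsOcc E n α g) (i : Fin N)
    (hi : h i.castSucc ≤ g i.castSucc) : h i.succ ≤ g i.succ :=
  hET.2 i (g i.succ) (hi.trans_lt (hg.1 i.castSucc_lt_succ)) (hg.2.2 i.succ)

theorem IsET.le_of_zero_le {E : ℕ → A} {n N : ℕ} {α : Fin (N+1) → A}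
    {h g : Fin (N+1) → ℕ} (hET : IsET E n α h) (hg : IsOcc E n α g) (h0 : h 0 ≤ g 0) :
    ∀ k, h k ≤ g k := by
  intro k
  induction k using Fin.induction with
  | zero => exact h0
  | succ i ih => exact hET.succ_le_of_castSucc_le hg i ih

theorem stmt1 (E : ℕ → A) (n : ℕ) {N : ℕ} (α : Fin (N+1) → A)
    (h h' : Fin (N+1) → ℕ) (hET : IsET E n α h) (hET' : IsET E n α h')
    (hlex : OccLex h h') : (∀ k, h k ≤ h' k) ∧ h 0 < h' 0 := by
  obtain ⟨i, -, hi⟩ := hlex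
  have h0 : h 0 < h' 0 :=
    lt_of_not_ge fun h0' => (hET'.le_of_zero_le hET.1 h0' i).not_gt hi
  exact ⟨hET.le_of_zero_le hET'.1 h0.le, h0⟩
end

section
/- An earliest transiting occurrence h_i^e of an N-node serial episode α is not a minimal occurrence if and only if the next earliest transiting occurrence h_{i+1}^e exists and satisfies h_i^e(v_N) = h_{i+1}^e(v_N). -/
variable {A : Type}

/-!
An earliest transiting occurrence `h` dominates, componentwise, every occurrence starting no
earlier than `h`. Hence `h` fails to be minimal exactly when some occurrence `g` starts after `h`
and ends at `h (v_N)`. The lexicographically least occurrence starting after `h` is then itself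
earliest transiting (otherwise one of its entries could be lowered), so it is the successor `h'`
of `h`, and it is squeezed between `h` and `g`, whence `h' (v_N) = h (v_N)`.
-/

open Function

section
variable {E : ℕ → A} {n N : ℕ} {α : Fin (N+1) → A}

theorem IsET.le_of_apply_zero_le_s2 {h g : Fin (N+1) → ℕ} (hh : IsET E n α h)
    (hg : IsOcc E n α g) (h0 : h 0 ≤ g 0) : h ≤ g := by
  intro i
  induction i using Fin.induction with
  | zero => exact h0
  | succ i ih => exact hh.2 i _ (ih.trans_lt (hg.1 i.castSucc_lt_succ)) (hg.2.2 i.succ)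

theorem occLex_of_apply_zero_lt {h g : Fin (N+1) → ℕ} (h0 : h 0 < g 0) : OccLex h g :=
  ⟨0, fun k hk => absurd hk (Fin.not_lt_zero k), h0⟩

theorem apply_zero_le_of_toLex_le {h g : Fin (N+1) → ℕ} (hle : toLex h ≤ toLex g) :
    h 0 ≤ g 0 := by
  by_contra! hlt
  exact hle.not_gt (occLex_of_apply_zero_lt hlt)

theorem IsET.apply_zero_lt_of_occLex {h h' : Fin (N+1) → ℕ} (hh' : IsET E n α h')
    (hh : IsOcc E n α h) (hlex : OccLex h h') : h 0 < h' 0 := by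
  by_contra! hle
  exact (Pi.toLex_monotone (hh'.le_of_apply_zero_le_s2 hh hle)).not_gt hlex

theorem IsOcc.update {g : Fin (N+1) → ℕ} (hg : IsOcc E n α g) (i : Fin N) {j : ℕ}
    (hij : g i.castSucc < j) (hji : j < g i.succ) (hj : E j = α i.succ) :
    IsOcc E n α (update g i.succ j) := by
  refine ⟨fun a b hab => ?_, fun a => ?_, fun a => ?_⟩
  · rcases eq_or_ne a i.succ with rfl | ha
    · rw [update_self, update_of_ne hab.ne']
      exact hji.trans (hg.1 hab)
    rcases eq_or_ne b i.succ with rfl | hb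
    · rw [update_self, update_of_ne ha]
      exact (hg.1.monotone (Fin.le_castSucc_iff.2 hab)).trans_lt hij
    · rw [update_of_ne ha, update_of_ne hb]
      exact hg.1 hab
  · rcases eq_or_ne a i.succ with rfl | ha
    · rw [update_self]
      exact hji.trans (hg.2.1 _)
    · rw [update_of_ne ha]
      exact hg.2.1 a
  · rcases eq_or_ne a i.succ with rfl | ha
    · rwa [update_self]
    · rw [update_of_ne ha]
      exact hg.2.2 a

theorem IsOcc.isET_of_minimal {g : Fin (N+1) → ℕ} (hg : IsOcc E n α g)
    (hmin : ∀ g', IsOcc E n α g' → g' 0 = g 0 → ¬ toLex g' < toLex g) : IsET E n α g := by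
  refine ⟨hg, fun i j hij hj => ?_⟩
  by_contra! hji
  exact hmin _ (hg.update i hij hji hj) (update_of_ne (Fin.succ_ne_zero i).symm ..)
    (Pi.toLex_update_lt_self_iff.2 hji)

theorem IsET.not_isMinOcc_iff {h : Fin (N+1) → ℕ} (hh : IsET E n α h) :
    ¬ IsMinOcc E n α h ↔
      ∃ g, IsOcc E n α g ∧ h 0 < g 0 ∧ g (Fin.last N) = h (Fin.last N) := by
  constructor
  · intro hnm
    have hsub : ¬ ∀ c d, h 0 ≤ c → d ≤ h (Fin.last N) → (h 0 < c ∨ d < h (Fin.last N)) →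
        ¬ WindowHasOcc E n α c d :=
      fun hmin => hnm ⟨hh.1, ⟨h, hh.1, le_rfl, le_rfl⟩, hmin⟩
    push Not at hsub
    obtain ⟨c, d, hc, hd, hcd, g, hg, hcg, hgd⟩ := hsub
    have hlast : h (Fin.last N) ≤ g (Fin.last N) := hh.le_of_apply_zero_le_s2 hg (hc.trans hcg) _
    refine ⟨g, hg, ?_, le_antisymm (hgd.trans hd) hlast⟩
    rcases hcd with hc' | hd'
    · exact hc'.trans_le hcg
    · exact absurd (hlast.trans hgd) hd'.not_ge
  · rintro ⟨g, hg, h0, hlast⟩ hmin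
    exact hmin.2.2 (g 0) (g (Fin.last N)) h0.le hlast.le (Or.inl h0) ⟨g, hg, le_rfl, le_rfl⟩

theorem IsET.exists_nextET {h g : Fin (N+1) → ℕ} (hh : IsET E n α h) (hg : IsOcc E n α g)
    (hlt : h 0 < g 0) : ∃ h', NextET E n α h h' ∧ h' 0 ≤ g 0 := by
  obtain ⟨h', ⟨hh'occ, hh'0⟩, hmin⟩ := (InvImage.wf toLex wellFounded_lt).has_min
    {f | IsOcc E n α f ∧ h 0 < f 0} ⟨g, hg, hlt⟩
  have hh' : IsET E n α h' :=
    hh'occ.isET_of_minimal fun f hf hf0 => hmin f ⟨hf, hf0 ▸ hh'0⟩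
  refine ⟨h', ⟨hh, hh', occLex_of_apply_zero_lt hh'0, ?_⟩,
    apply_zero_le_of_toLex_le (not_lt.1 (hmin g ⟨hg, hlt⟩))⟩
  rintro ⟨f, hf, hhf, hfh'⟩
  exact hmin f ⟨hf.1, hf.apply_zero_lt_of_occLex hh.1 hhf⟩ hfh'

end

theorem stmt2 (E : ℕ → A) (n : ℕ) {N : ℕ} (α : Fin (N+1) → A)
    (h : Fin (N+1) → ℕ) (hET : IsET E n α h) :
    ¬ IsMinOcc E n α h ↔
      ∃ h', NextET E n α h h' ∧ h (Fin.last N) = h' (Fin.last N) := by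
  rw [hET.not_isMinOcc_iff]
  constructor
  · rintro ⟨g, hg, hlt, hlast⟩
    obtain ⟨h', hnext, h'0⟩ := hET.exists_nextET hg hlt
    have hh' : IsET E n α h' := hnext.2.1
    have h0 : h 0 ≤ h' 0 := (hh'.apply_zero_lt_of_occLex hET.1 hnext.2.2.1).le
    refine ⟨h', hnext, le_antisymm (hET.le_of_apply_zero_le_s2 hh'.1 h0 _) ?_⟩
    exact hlast ▸ hh'.le_of_apply_zero_le_s2 hg h'0 _
  · rintro ⟨h', ⟨-, hh', hlex, -⟩, hlast⟩
    exact ⟨h', hh'.1, hh'.apply_zero_lt_of_occLex hET.1 hlex, hlast.symm⟩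
end

section
/- If an earliest transiting occurrence h_i^e of a serial episode α is minimal and h_{i+1}^e exists, then h_i^e and h_{i+1}^e are non-interleaved, i.e., h_{i+1}^e(v_j) ≥ h_i^e(v_{j+1}) for all j = 1,...,N−1. -/
variable {A : Type}

/-!
If `h` and `h'` interleaved at some node `j`, i.e. `h' (v_j) < h (v_{j+1})`, then following `h'`
up to `v_j` and `h` afterwards would give an occurrence in the window `[h' (v_1), h (v_N)]`.
Since `h'` comes after `h` and is earliest transiting, it starts strictly later than `h`,
so this window is a proper subwindow of the window of `h`, contradicting minimality.
-/

section SerialEpisode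

variable {E : ℕ → A} {n N : ℕ} {α : Fin (N+1) → A}

def splice (j : Fin N) (g h : Fin (N+1) → ℕ) : Fin (N+1) → ℕ :=
  fun k => if k ≤ j.castSucc then g k else h k

@[simp]
lemma splice_zero (j : Fin N) (g h : Fin (N+1) → ℕ) : splice j g h 0 = g 0 :=
  if_pos (Fin.zero_le _)

@[simp]
lemma splice_last (j : Fin N) (g h : Fin (N+1) → ℕ) :
    splice j g h (Fin.last N) = h (Fin.last N) :=
  if_neg (not_le.mpr (Fin.castSucc_lt_last j))

lemma strictMono_splice {j : Fin N} {g h : Fin (N+1) → ℕ} (hg : StrictMono g)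
    (hh : StrictMono h) (hcross : g j.castSucc < h j.succ) : StrictMono (splice j g h) := by
  intro a b hab
  unfold splice
  split_ifs with ha hb hb
  · exact hg hab
  · calc g a ≤ g j.castSucc := hg.monotone ha
      _ < h j.succ := hcross
      _ ≤ h b := hh.monotone (Fin.castSucc_lt_iff_succ_le.mp (not_le.mp hb))
  · exact absurd (hab.le.trans hb) ha
  · exact hh hab

lemma isOcc_splice {j : Fin N} {g h : Fin (N+1) → ℕ} (hg : IsOcc E n α g)
    (hh : IsOcc E n α h) (hcross : g j.castSucc < h j.succ) :
    IsOcc E n α (splice j g h) := by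
  refine ⟨strictMono_splice hg.1 hh.1 hcross, fun k => ?_, fun k => ?_⟩ <;>
    unfold splice <;> split_ifs
  exacts [hg.2.1 k, hh.2.1 k, hg.2.2 k, hh.2.2 k]

lemma windowHasOcc_of_cross {j : Fin N} {g h : Fin (N+1) → ℕ} (hg : IsOcc E n α g)
    (hh : IsOcc E n α h) (hcross : g j.castSucc < h j.succ) :
    WindowHasOcc E n α (g 0) (h (Fin.last N)) :=
  ⟨splice j g h, isOcc_splice hg hh hcross, (splice_zero j g h).ge, (splice_last j g h).le⟩

lemma OccLex.apply_zero_lt {h h' : Fin (N+1) → ℕ} (hlex : OccLex h h') (hh : IsOcc E n α h)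
    (hh' : IsET E n α h') : h 0 < h' 0 := by
  obtain ⟨i, hagree, hlt⟩ := hlex
  cases i using Fin.cases with
  | zero => exact hlt
  | succ i =>
    have hprev : h' i.castSucc < h i.succ :=
      hagree _ i.castSucc_lt_succ ▸ hh.1 i.castSucc_lt_succ
    exact absurd (hh'.2 i _ hprev (hh.2.2 _)) (not_le.mpr hlt)

lemma IsMinOcc.not_windowHasOcc {h : Fin (N+1) → ℕ} (hmin : IsMinOcc E n α h) {c : ℕ}
    (hc : h 0 < c) : ¬ WindowHasOcc E n α c (h (Fin.last N)) :=
  hmin.2.2 c _ hc.le le_rfl (Or.inl hc)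

end SerialEpisode

theorem stmt4 (E : ℕ → A) (n : ℕ) {N : ℕ} (α : Fin (N+1) → A)
    (h h' : Fin (N+1) → ℕ) (hmin : IsMinOcc E n α h)
    (hnext : NextET E n α h h') : NonInterleaved h h' := by
  obtain ⟨hET, hET', hlex, -⟩ := hnext
  intro j
  by_contra! hcross
  exact hmin.not_windowHasOcc (hlex.apply_zero_lt hET.1 hET')
    (windowHasOcc_of_cross hET'.1 hET.1 hcross)
end

section
/- The minimal-occurrence frequency of a serial episode is at most its non-interleaved frequency: f_mi(α) ≤ f_ni(α). -/
variable {A : Type}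

/-- Minimal-occurrence frequency: the number of minimal windows. -/
noncomputable def fmi (E : ℕ → A) (n : ℕ) {N : ℕ} (α : Fin (N+1) → A) : ℕ :=
  {p : ℕ × ℕ | IsMinWindow E n α p.1 p.2}.ncard

/-- Non-interleaved frequency: the maximum cardinality of a pairwise
non-interleaved set of occurrences. -/
noncomputable def fni (E : ℕ → A) (n : ℕ) {N : ℕ} (α : Fin (N+1) → A) : ℕ :=
  sSup {m | ∃ S : Set (Fin (N+1) → ℕ), S.Finite ∧ S.ncard = m ∧
    (∀ h ∈ S, IsOcc E n α h) ∧
    S.Pairwise (fun a b => NonInterleaved a b ∨ NonInterleaved b a)}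

/-- Non-overlapped frequency: the maximum cardinality of a pairwise
non-overlapped set of occurrences. -/
noncomputable def fno (E : ℕ → A) (n : ℕ) {N : ℕ} (α : Fin (N+1) → A) : ℕ :=
  sSup {m | ∃ S : Set (Fin (N+1) → ℕ), S.Finite ∧ S.ncard = m ∧
    (∀ h ∈ S, IsOcc E n α h) ∧ S.Pairwise NonOverlapped}

/-- Distinct-occurrences frequency: the maximum cardinality of a set of
occurrences no two of which share two or more events. -/
noncomputable def fd (E : ℕ → A) (n : ℕ) {N : ℕ} (α : Fin (N+1) → A) : ℕ :=
  sSup {m | ∃ S : Set (Fin (N+1) → ℕ), S.Finite ∧ S.ncard = m ∧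
    (∀ h ∈ S, IsOcc E n α h) ∧
    S.Pairwise (fun a b => (Set.range a ∩ Set.range b).ncard ≤ 1)}


lemma occ_finite (E : ℕ → A) (n : ℕ) {N : ℕ} (α : Fin (N+1) → A) :
    {h : Fin (N+1) → ℕ | IsOcc E n α h}.Finite := by
  apply Set.Finite.subset (Set.Finite.pi (fun _ : Fin (N+1) => Set.finite_Iio n))
  intro h hh
  simp only [Set.mem_pi, Set.mem_univ, Set.mem_Iio, forall_true_left]
  exact hh.2.1

lemma exists_occ_endpoints (E : ℕ → A) (n : ℕ) {N : ℕ} (α : Fin (N+1) → A) {a b : ℕ}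
    (hw : IsMinWindow E n α a b) :
    ∃ h, IsOcc E n α h ∧ h 0 = a ∧ h (Fin.last N) = b := by
  obtain ⟨h, hocc, ha, hb⟩ := hw.1
  refine ⟨h, hocc, ?_, ?_⟩
  · by_contra hne
    have hlt : a < h 0 := lt_of_le_of_ne ha (Ne.symm hne)
    exact hw.2 (h 0) b hlt.le le_rfl (Or.inl hlt) ⟨h, hocc, le_rfl, hb⟩
  · by_contra hne
    have hlt : h (Fin.last N) < b := lt_of_le_of_ne hb hne
    exact hw.2 a (h (Fin.last N)) le_rfl hlt.le (Or.inr hlt) ⟨h, hocc, ha, le_rfl⟩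

lemma splice_lemma (E : ℕ → A) (n : ℕ) {N : ℕ} (α : Fin (N+1) → A)
    {h1 h2 : Fin (N+1) → ℕ} (o1 : IsOcc E n α h1) (o2 : IsOcc E n α h2)
    (hmin : IsMinWindow E n α (h1 0) (h1 (Fin.last N)))
    (hlt : h1 0 < h2 0) : NonInterleaved h1 h2 := by
  by_contra hni
  unfold NonInterleaved at hni
  push_neg at hni
  obtain ⟨j, hj⟩ := hni
  set g : Fin (N+1) → ℕ := fun i => if (i : ℕ) ≤ (j : ℕ) then h2 i else h1 i with hgdef
  have hmono : StrictMono g := by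
    intro i i' hii
    simp only [hgdef]
    by_cases hi : (i : ℕ) ≤ (j : ℕ)
    · by_cases hi' : (i' : ℕ) ≤ (j : ℕ)
      · simp only [hi, hi', if_true]
        exact o2.1 hii
      · simp only [hi, hi', if_true, if_false]
        calc h2 i ≤ h2 j.castSucc := o2.1.monotone (by simpa [Fin.le_def] using hi)
          _ < h1 j.succ := hj
          _ ≤ h1 i' := o1.1.monotone (by simp [Fin.le_def]; omega)
    · have hi' : ¬ (i' : ℕ) ≤ (j : ℕ) := by
        have := (Fin.lt_def.mp hii); omega
      simp only [hi, hi', if_false]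
      exact o1.1 hii
  have gocc : IsOcc E n α g := by
    refine ⟨hmono, ?_, ?_⟩
    · intro i; simp only [hgdef]
      split <;> [exact o2.2.1 i; exact o1.2.1 i]
    · intro i; simp only [hgdef]
      split <;> [exact o2.2.2 i; exact o1.2.2 i]
  have g0 : g 0 = h2 0 := by simp [hgdef]
  have glast : g (Fin.last N) = h1 (Fin.last N) := by
    have : ¬ ((Fin.last N : ℕ) ≤ (j : ℕ)) := by
      simp only [Fin.val_last, not_le]; exact j.isLt
    simp [hgdef, this]
  exact hmin.2 (h2 0) (h1 (Fin.last N)) hlt.le le_rfl (Or.inl hlt)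
    ⟨g, gocc, le_of_eq g0.symm, le_of_eq glast⟩

theorem stmt6 (E : ℕ → A) (n : ℕ) {N : ℕ} (α : Fin (N+1) → A) :
    fmi E n α ≤ fni E n α := by
  classical
  set W : Set (ℕ × ℕ) := {p | IsMinWindow E n α p.1 p.2} with hW
  have hex : ∀ p ∈ W, ∃ h, IsOcc E n α h ∧ h 0 = p.1 ∧ h (Fin.last N) = p.2 :=
    fun p hp => exists_occ_endpoints E n α hp
  choose! phi hphi using hex
  have hinj : Set.InjOn phi W := by
    intro p hp q hq heq
    obtain ⟨_, hp0, hpl⟩ := hphi p hp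
    obtain ⟨_, hq0, hql⟩ := hphi q hq
    have h1 : p.1 = q.1 := by rw [← hp0, ← hq0, heq]
    have h2 : p.2 = q.2 := by rw [← hpl, ← hql, heq]
    exact Prod.ext h1 h2
  set S : Set (Fin (N+1) → ℕ) := phi '' W with hS
  have hSocc : ∀ h ∈ S, IsOcc E n α h := by
    rintro h ⟨p, hp, rfl⟩
    exact (hphi p hp).1
  have hSsub : S ⊆ {h : Fin (N+1) → ℕ | IsOcc E n α h} := hSocc
  have hSfin : S.Finite := (occ_finite E n α).subset hSsub
  have hWfin : W.Finite := Set.Finite.of_finite_image hSfin hinj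
  have hcard : W.ncard = S.ncard := (Set.ncard_image_of_injOn hinj).symm
  have hpair : S.Pairwise (fun a b => NonInterleaved a b ∨ NonInterleaved b a) := by
    rintro h1 ⟨p, hp, rfl⟩ h2 ⟨q, hq, rfl⟩ hne
    have hpq : p ≠ q := fun h => hne (h ▸ rfl)
    obtain ⟨op, hp0, hpl⟩ := hphi p hp
    obtain ⟨oq, hq0, hql⟩ := hphi q hq
    have hpmin : IsMinWindow E n α (phi p 0) (phi p (Fin.last N)) := by
      rw [hp0, hpl]; exact hp
    have hqmin : IsMinWindow E n α (phi q 0) (phi q (Fin.last N)) := by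
      rw [hq0, hql]; exact hq
    rcases lt_trichotomy p.1 q.1 with hlt | heq1 | hgt
    · exact Or.inl (splice_lemma E n α op oq hpmin (by rw [hp0, hq0]; exact hlt))
    · exfalso
      have hne2 : p.2 ≠ q.2 := fun h => hpq (Prod.ext heq1 h)
      rcases lt_or_gt_of_ne hne2 with hlt2 | hgt2
      · exact hq.2 q.1 p.2 le_rfl hlt2.le (Or.inr hlt2)
          ⟨phi p, op, by rw [hp0, heq1], le_of_eq hpl⟩
      · exact hp.2 p.1 q.2 le_rfl hgt2.le (Or.inr hgt2)
          ⟨phi q, oq, by rw [hq0, heq1], le_of_eq hql⟩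
    · exact Or.inr (splice_lemma E n α oq op hqmin (by rw [hp0, hq0]; exact hgt))
  have hmem : S.ncard ∈ {m | ∃ S : Set (Fin (N+1) → ℕ), S.Finite ∧ S.ncard = m ∧
      (∀ h ∈ S, IsOcc E n α h) ∧
      S.Pairwise (fun a b => NonInterleaved a b ∨ NonInterleaved b a)} :=
    ⟨S, hSfin, rfl, hSocc, hpair⟩
  have hbdd : BddAbove {m | ∃ S : Set (Fin (N+1) → ℕ), S.Finite ∧ S.ncard = m ∧
      (∀ h ∈ S, IsOcc E n α h) ∧
      S.Pairwise (fun a b => NonInterleaved a b ∨ NonInterleaved b a)} := by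
    refine ⟨{h : Fin (N+1) → ℕ | IsOcc E n α h}.ncard, ?_⟩
    rintro m ⟨T, hTfin, rfl, hTocc, -⟩
    exact Set.ncard_le_ncard hTocc (occ_finite E n α)
  calc fmi E n α = W.ncard := rfl
    _ = S.ncard := hcard
    _ ≤ fni E n α := le_csSup hbdd hmem
end

section
/- The non-overlapped frequency of a serial episode is at most its minimal-occurrence frequency: f_no(α) ≤ f_mi(α). -/
variable {A : Type}

/-! Choosing, for every occurrence, a minimal window inside its own window sends pairwise
non-overlapped occurrences to minimal windows with pairwise distinct right ends, since the
windows of non-overlapped occurrences are disjoint. -/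

section MinimalWindows

variable {E : ℕ → A} {n N : ℕ} {α : Fin (N+1) → A}

theorem IsOcc.window {h : Fin (N+1) → ℕ} (hocc : IsOcc E n α h) :
    WindowHasOcc E n α (h 0) (h (Fin.last N)) :=
  ⟨h, hocc, le_rfl, le_rfl⟩

theorem WindowHasOcc.le {a b : ℕ} (hw : WindowHasOcc E n α a b) : a ≤ b := by
  obtain ⟨h, hocc, ha, hb⟩ := hw
  exact ha.trans ((hocc.1.monotone (Fin.zero_le _)).trans hb)

theorem WindowHasOcc.exists_isMinWindow_le {a b : ℕ} (hw : WindowHasOcc E n α a b) :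
    ∃ c d, a ≤ c ∧ d ≤ b ∧ IsMinWindow E n α c d := by
  by_cases hmin : ∀ c d, a ≤ c → d ≤ b → (a < c ∨ d < b) → ¬ WindowHasOcc E n α c d
  · exact ⟨a, b, le_rfl, le_rfl, hw, hmin⟩
  push Not at hmin
  obtain ⟨c, d, hac, hdb, hproper, hcd⟩ := hmin
  have hcd_le := hcd.le
  obtain ⟨c', d', hcc', hd'd, hmin'⟩ := hcd.exists_isMinWindow_le
  exact ⟨c', d', hac.trans hcc', hd'd.trans hdb, hmin'⟩
termination_by b - a
decreasing_by omega

theorem IsMinWindow.right_lt {a b : ℕ} (hm : IsMinWindow E n α a b) : b < n := by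
  obtain ⟨⟨h, hocc, ha, hb⟩, hmin⟩ := hm
  have hb_eq : h (Fin.last N) = b := by
    by_contra hne
    exact hmin a _ le_rfl hb (Or.inr (lt_of_le_of_ne hb hne)) ⟨h, hocc, ha, le_rfl⟩
  exact hb_eq ▸ hocc.2.1 _

theorem finite_setOf_isMinWindow :
    {p : ℕ × ℕ | IsMinWindow E n α p.1 p.2}.Finite := by
  refine ((Set.finite_Iio n).prod (Set.finite_Iio n)).subset fun p hp => ?_
  exact ⟨hp.1.le.trans_lt hp.right_lt, hp.right_lt⟩

theorem ncard_le_fmi_of_pairwise_nonOverlapped {S : Set (Fin (N+1) → ℕ)}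
    (hocc : ∀ h ∈ S, IsOcc E n α h) (hS : S.Pairwise NonOverlapped) :
    S.ncard ≤ fmi E n α := by
  choose c d hc hd hmin using fun h : S => (hocc h h.2).window.exists_isMinWindow_le
  have hd_lt : ∀ h₁ h₂ : S, h₁.1 (Fin.last N) < h₂.1 0 → d h₁ < d h₂ := fun h₁ h₂ h12 =>
    (hd h₁).trans_lt (h12.trans_le ((hc h₂).trans (hmin h₂).1.le))
  let f : S → {p : ℕ × ℕ | IsMinWindow E n α p.1 p.2} := fun h => ⟨(c h, d h), hmin h⟩
  have hf : Function.Injective f := by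
    intro h₁ h₂ heq
    have hd_eq : d h₁ = d h₂ := congrArg (fun p => p.1.2) heq
    by_contra hne
    rcases hS h₁.2 h₂.2 (Subtype.coe_injective.ne hne) with h12 | h21
    · exact (hd_lt h₁ h₂ h12).ne hd_eq
    · exact (hd_lt h₂ h₁ h21).ne' hd_eq
  have : Finite {p : ℕ × ℕ | IsMinWindow E n α p.1 p.2} := finite_setOf_isMinWindow.to_subtype
  rw [fmi, ← Nat.card_coe_set_eq, ← Nat.card_coe_set_eq]
  exact Nat.card_le_card_of_injective f hf

end MinimalWindows

theorem stmt7 (E : ℕ → A) (n : ℕ) {N : ℕ} (α : Fin (N+1) → A) :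
    fno E n α ≤ fmi E n α := by
  refine csSup_le ⟨0, ∅, Set.finite_empty, Set.ncard_empty _, by simp, Set.pairwise_empty _⟩ ?_
  rintro m ⟨S, -, rfl, hocc, hS⟩
  exact ncard_le_fmi_of_pairwise_nonOverlapped hocc hS
end

section
/- Any set of pairwise non-interleaved occurrences of an injective serial episode is a set of pairwise distinct occurrences, i.e., no two occurrences in the set share two or more event indices. Consequently f_ni(α) ≤ f_d(α) for injective serial episodes α. -/
variable {A : Type}

lemma ni_inter_sub {E : ℕ → A} {n : ℕ} {N : ℕ} {α : Fin (N+1) → A}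
    (hinj : Function.Injective α) {h1 h2 : Fin (N+1) → ℕ}
    (o1 : IsOcc E n α h1) (o2 : IsOcc E n α h2) (hni : NonInterleaved h1 h2) :
    (Set.range h1 ∩ Set.range h2).Subsingleton := by
  -- any shared value is h1 i = h2 i with a unique i
  have key : ∀ x ∈ Set.range h1 ∩ Set.range h2, ∃ i, x = h1 i ∧ x = h2 i := by
    rintro x ⟨⟨i, hi⟩, ⟨j, hj⟩⟩
    have : α i = α j := by
      rw [← o1.2.2 i, ← o2.2.2 j, hi, hj]
    have hij : i = j := hinj this
    exact ⟨i, hi.symm, by rw [hij]; exact hj.symm⟩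
  intro x hx y hy
  obtain ⟨i, hxi1, hxi2⟩ := key x hx
  obtain ⟨j, hyj1, hyj2⟩ := key y hy
  have hij : i = j := by
    by_contra hne
    rcases lt_or_gt_of_ne hne with hlt | hlt
    · have hN : (i : ℕ) < N := lt_of_lt_of_le hlt (Nat.lt_succ_iff.mp j.isLt)
      set k : Fin N := ⟨i, hN⟩
      have hc : k.castSucc = i := Fin.ext rfl
      have h1lt : h1 k.castSucc < h1 k.succ := o1.1 (Fin.castSucc_lt_succ (i := k))
      have := hni k
      rw [hc] at h1lt this
      omega
    · have hN : (j : ℕ) < N := lt_of_lt_of_le hlt (Nat.lt_succ_iff.mp i.isLt)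
      set k : Fin N := ⟨j, hN⟩
      have hc : k.castSucc = j := Fin.ext rfl
      have h1lt : h1 k.castSucc < h1 k.succ := o1.1 (Fin.castSucc_lt_succ (i := k))
      have := hni k
      rw [hc] at h1lt this
      omega
  rw [hxi1, hyj1, hij]

lemma ni_ncard_le {E : ℕ → A} {n : ℕ} {N : ℕ} {α : Fin (N+1) → A}
    (hinj : Function.Injective α) {h1 h2 : Fin (N+1) → ℕ}
    (o1 : IsOcc E n α h1) (o2 : IsOcc E n α h2)
    (hni : NonInterleaved h1 h2 ∨ NonInterleaved h2 h1) :
    (Set.range h1 ∩ Set.range h2).ncard ≤ 1 := by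
  have hs : (Set.range h1 ∩ Set.range h2).Subsingleton := by
    rcases hni with h | h
    · exact ni_inter_sub hinj o1 o2 h
    · have := ni_inter_sub hinj o2 o1 h
      rwa [Set.inter_comm]
  rcases hs.eq_empty_or_singleton with he | ⟨a, ha⟩
  · simp [he]
  · simp [ha]

theorem stmt8 (E : ℕ → A) (n : ℕ) {N : ℕ} (α : Fin (N+1) → A)
    (hinj : Function.Injective α) :
    (∀ S : Set (Fin (N+1) → ℕ), (∀ h ∈ S, IsOcc E n α h) →
      S.Pairwise (fun a b => NonInterleaved a b ∨ NonInterleaved b a) →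
      S.Pairwise (fun a b => (Set.range a ∩ Set.range b).ncard ≤ 1)) ∧
    fni E n α ≤ fd E n α := by
  have part1 : ∀ S : Set (Fin (N+1) → ℕ), (∀ h ∈ S, IsOcc E n α h) →
      S.Pairwise (fun a b => NonInterleaved a b ∨ NonInterleaved b a) →
      S.Pairwise (fun a b => (Set.range a ∩ Set.range b).ncard ≤ 1) := by
    intro S hocc hpw a ha b hb hne
    exact ni_ncard_le hinj (hocc a ha) (hocc b hb) (hpw ha hb hne)
  refine ⟨part1, ?_⟩
  -- the target set (for fd) is bounded above
  have hfin : ({h : Fin (N+1) → ℕ | ∀ i, h i < n}).Finite := by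
    have : {h : Fin (N+1) → ℕ | ∀ i, h i < n} =
        Set.pi Set.univ (fun _ => Set.Iio n) := by
      ext h; simp [Set.mem_pi]
    rw [this]
    exact Set.Finite.pi fun _ => Set.finite_Iio n
  have hbdd : BddAbove {m | ∃ S : Set (Fin (N+1) → ℕ), S.Finite ∧ S.ncard = m ∧
      (∀ h ∈ S, IsOcc E n α h) ∧
      S.Pairwise (fun a b => (Set.range a ∩ Set.range b).ncard ≤ 1)} := by
    refine ⟨hfin.toFinset.card, ?_⟩
    rintro m ⟨S, hSfin, rfl, hocc, -⟩
    have hsub : S ⊆ {h : Fin (N+1) → ℕ | ∀ i, h i < n} := by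
      intro h hh; exact (hocc h hh).2.1
    calc S.ncard ≤ ({h : Fin (N+1) → ℕ | ∀ i, h i < n}).ncard :=
          Set.ncard_le_ncard hsub hfin
      _ = hfin.toFinset.card := Set.ncard_eq_toFinset_card _ hfin
  have hne : ({m | ∃ S : Set (Fin (N+1) → ℕ), S.Finite ∧ S.ncard = m ∧
      (∀ h ∈ S, IsOcc E n α h) ∧
      S.Pairwise (fun a b => NonInterleaved a b ∨ NonInterleaved b a)}).Nonempty :=
    ⟨0, ∅, Set.finite_empty, Set.ncard_empty _, by simp, by simp⟩
  have hsub : {m | ∃ S : Set (Fin (N+1) → ℕ), S.Finite ∧ S.ncard = m ∧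
      (∀ h ∈ S, IsOcc E n α h) ∧
      S.Pairwise (fun a b => NonInterleaved a b ∨ NonInterleaved b a)} ⊆
      {m | ∃ S : Set (Fin (N+1) → ℕ), S.Finite ∧ S.ncard = m ∧
      (∀ h ∈ S, IsOcc E n α h) ∧
      S.Pairwise (fun a b => (Set.range a ∩ Set.range b).ncard ≤ 1)} := by
    rintro m ⟨S, hSfin, rfl, hocc, hpw⟩
    exact ⟨S, hSfin, rfl, hocc, part1 S hocc hpw⟩
  exact csSup_le_csSup hbdd hne hsub
end

section
/- For an injective serial episode, any two non-interleaved occurrences h1 <⋆ h2 share at most one event index: |range(h1) ∩ range(h2)| ≤ 1. -/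
variable {A : Type}

theorem stmt9 (E : ℕ → A) (n : ℕ) {N : ℕ} (α : Fin (N+1) → A)
    (hinj : Function.Injective α) (h1 h2 : Fin (N+1) → ℕ)
    (h1occ : IsOcc E n α h1) (h2occ : IsOcc E n α h2)
    (hlex : OccLex h1 h2) (hni : NonInterleaved h1 h2) :
    (Set.range h1 ∩ Set.range h2).ncard ≤ 1 := by
  obtain ⟨m1, b1, e1⟩ := h1occ
  obtain ⟨m2, b2, e2⟩ := h2occ
  -- any element of the intersection is h1 i = h2 i for the same i
  have key : ∀ x ∈ Set.range h1 ∩ Set.range h2, ∃ i, h1 i = x ∧ h2 i = x := by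
    rintro x ⟨⟨i, hi⟩, ⟨j, hj⟩⟩
    have : α i = α j := by
      rw [← e1 i, ← e2 j, hi, hj]
    have hij : i = j := hinj this
    exact ⟨i, hi, hij ▸ hj⟩
  have fix : ∀ i j : Fin (N+1), h1 i = h2 i → h1 j = h2 j → i = j := by
    intro i j hi hj
    by_contra hne
    rcases lt_or_gt_of_ne hne with hlt | hlt
    · have hiN : (i : ℕ) < N := lt_of_lt_of_le hlt (Nat.lt_succ_iff.mp j.isLt)
      set ι : Fin N := ⟨i, hiN⟩
      have hcast : ι.castSucc = i := Fin.ext rfl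
      have := hni ι
      rw [hcast, ← hi] at this
      have h2' : h1 i < h1 ι.succ := m1 (by simp [ι, Fin.lt_def])
      omega
    · have hjN : (j : ℕ) < N := lt_of_lt_of_le hlt (Nat.lt_succ_iff.mp i.isLt)
      set ι : Fin N := ⟨j, hjN⟩
      have hcast : ι.castSucc = j := Fin.ext rfl
      have := hni ι
      rw [hcast, ← hj] at this
      have h2' : h1 j < h1 ι.succ := m1 (by simp [ι, Fin.lt_def])
      omega
  have hsub : (Set.range h1 ∩ Set.range h2).Subsingleton := by
    intro x hx y hy
    obtain ⟨i, hi1, hi2⟩ := key x hx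
    obtain ⟨j, hj1, hj2⟩ := key y hy
    rw [← hi1, ← hj1, fix i j (hi1.trans hi2.symm) (hj1.trans hj2.symm)]
  exact (Set.ncard_le_one_iff hsub.finite).mpr fun ha hb => hsub ha hb
end

section
/- If H' = {h'_1 <⋆ ... <⋆ h'_l} is any set of pairwise non-overlapped occurrences of α each with span at most T_X, and H = {h_1, ..., h_f} is the greedy sequence of non-overlapped minimal occurrences with span ≤ T_X (each chosen earliest after the previous), then h_i(v_N) ≤ h'_i(v_N) for all i ≤ min(f, l). -/
variable {A : Type}

/-- The span of the occurrence `h` (w.r.t. the times `t`) is at most `TX`. -/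
def SpanLe (t : ℕ → ℕ) {N : ℕ} (h : Fin (N+1) → ℕ) (TX : ℕ) : Prop :=
  t (h (Fin.last N)) - t (h 0) ≤ TX

/-- The greedy sequence `h 0, …, h (f-1)` of non-overlapped minimal
occurrences with span at most `TX`, each chosen earliest (lexicographically
least) after the end of the previous one. -/
def GreedyMin (E : ℕ → A) (n : ℕ) {N : ℕ} (α : Fin (N+1) → A)
    (t : ℕ → ℕ) (TX f : ℕ) (h : ℕ → Fin (N+1) → ℕ) : Prop :=
  (∀ i < f, IsMinOcc E n α (h i) ∧ SpanLe t (h i) TX) ∧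
  (0 < f → ∀ g, IsMinOcc E n α g → SpanLe t g TX → ¬ OccLex g (h 0)) ∧
  (∀ i, i + 1 < f → h i (Fin.last N) < h (i+1) 0 ∧
    ∀ g, IsMinOcc E n α g → SpanLe t g TX → h i (Fin.last N) < g 0 →
      ¬ OccLex g (h (i+1)))

/-- No minimal occurrence of span at most `TX` starts after the end of the
last occurrence of the greedy sequence (and if any such occurrence exists at
all then the sequence is nonempty). -/
def GreedyComplete (E : ℕ → A) (n : ℕ) {N : ℕ} (α : Fin (N+1) → A)
    (t : ℕ → ℕ) (TX f : ℕ) (h : ℕ → Fin (N+1) → ℕ) : Prop :=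
  ∀ g, IsMinOcc E n α g → SpanLe t g TX →
    0 < f ∧ g 0 ≤ h (f-1) (Fin.last N)

section Aux

open Classical

/-- Lexicographic trichotomy for occurrences. -/
lemma occLex_trichotomy {N : ℕ} (h1 h2 : Fin (N+1) → ℕ) :
    OccLex h1 h2 ∨ h1 = h2 ∨ OccLex h2 h1 := by
  by_cases he : h1 = h2
  · exact Or.inr (Or.inl he)
  · have hne : (Finset.univ.filter fun k => h1 k ≠ h2 k).Nonempty := by
      by_contra hc
      rw [Finset.not_nonempty_iff_eq_empty, Finset.filter_eq_empty_iff] at hc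
      exact he (funext fun k => not_not.mp (hc (Finset.mem_univ k)))
    obtain ⟨i, hi, hmin⟩ := Finset.exists_min_image _ id hne
    have hine : h1 i ≠ h2 i := (Finset.mem_filter.mp hi).2
    have hpre : ∀ k < i, h1 k = h2 k := by
      intro k hk
      by_contra hkne
      have : i ≤ k := hmin k (Finset.mem_filter.mpr ⟨Finset.mem_univ k, hkne⟩)
      exact absurd hk (not_lt.mpr this)
    rcases lt_trichotomy (h1 i) (h2 i) with hlt | heq | hgt
    · exact Or.inl ⟨i, hpre, hlt⟩
    · exact absurd heq hine
    · exact Or.inr (Or.inr ⟨i, fun k hk => (hpre k hk).symm, hgt⟩)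

lemma occLex_zero_le {N : ℕ} {h1 h2 : Fin (N+1) → ℕ} (hl : OccLex h1 h2) :
    h1 0 ≤ h2 0 := by
  obtain ⟨i, hpre, hlt⟩ := hl
  rcases (Fin.zero_le i).lt_or_eq with h0 | h0
  · exact le_of_eq (hpre 0 h0)
  · rw [← h0] at hlt; exact le_of_lt hlt

/-- A minimal occurrence ends no later than any occurrence starting no earlier. -/
lemma minOcc_last_le {E : ℕ → A} {n : ℕ} {N : ℕ} {α : Fin (N+1) → A}
    {g1 g2 : Fin (N+1) → ℕ} (h1 : IsMinOcc E n α g1) (h2 : IsOcc E n α g2)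
    (h0 : g1 0 ≤ g2 0) : g1 (Fin.last N) ≤ g2 (Fin.last N) := by
  by_contra hc
  push_neg at hc
  exact h1.2.2 (g2 0) (g2 (Fin.last N)) h0 (le_of_lt hc) (Or.inr hc)
    ⟨g2, h2, le_refl _, le_refl _⟩

lemma windowHasOcc_mono {E : ℕ → A} {n : ℕ} {N : ℕ} {α : Fin (N+1) → A}
    {a b a' b' : ℕ} (ha : a' ≤ a) (hb : b ≤ b') (hw : WindowHasOcc E n α a b) :
    WindowHasOcc E n α a' b' := by
  obtain ⟨g, hg, hga, hgb⟩ := hw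
  exact ⟨g, hg, le_trans ha hga, le_trans hgb hb⟩

/-- Every occurrence contains a minimal occurrence within its window. -/
lemma exists_minOcc_within {E : ℕ → A} {n : ℕ} {N : ℕ} {α : Fin (N+1) → A}
    {g : Fin (N+1) → ℕ} (hg : IsOcc E n α g) :
    ∃ m, IsMinOcc E n α m ∧ g 0 ≤ m 0 ∧ m (Fin.last N) ≤ g (Fin.last N) := by
  set b := g (Fin.last N) with hb
  have hwin_le : ∀ {c d : ℕ}, WindowHasOcc E n α c d → c ≤ d := by
    intro c d ⟨u, hu, huc, hud⟩
    exact le_trans huc (le_trans (hu.1.monotone (Fin.zero_le _)) hud)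
  set P : ℕ → Prop := fun c => g 0 ≤ c ∧ WindowHasOcc E n α c b with hP
  have hPg0 : P (g 0) := ⟨le_refl _, ⟨g, hg, le_refl _, le_refl _⟩⟩
  have hg0b : g 0 ≤ b := hg.1.monotone (Fin.zero_le _)
  set c := Nat.findGreatest P b with hc
  have hPc : P c := Nat.findGreatest_spec hg0b hPg0
  have hQb : WindowHasOcc E n α c b := hPc.2
  set Q : ℕ → Prop := fun d => WindowHasOcc E n α c d with hQ
  have hQex : ∃ d, Q d := ⟨b, hQb⟩
  set d := Nat.find hQex with hd
  have hQd : WindowHasOcc E n α c d := Nat.find_spec hQex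
  have hdb : d ≤ b := Nat.find_min' hQex hQb
  obtain ⟨m, hm, hmc, hmd⟩ := hQd
  refine ⟨m, ⟨hm, ⟨m, hm, le_refl _, le_refl _⟩, ?_⟩, le_trans hPc.1 hmc,
    le_trans (le_trans (hm.1.monotone (le_refl _)) hmd) hdb⟩
  intro c' d' hc' hd' hproper hw'
  have hcc' : c ≤ c' := le_trans hmc hc'
  have hd'd : d' ≤ d := le_trans hd' hmd
  rcases hproper with hp | hp
  · -- m 0 < c', so c < c', contradicting maximality of c
    have hclt : c < c' := lt_of_le_of_lt hmc hp
    have hc'b : c' ≤ b := le_trans (hwin_le hw') (le_trans hd'd hdb)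
    exact Nat.findGreatest_is_greatest hclt hc'b
      ⟨le_trans hPc.1 (le_of_lt hclt),
        windowHasOcc_mono (le_refl _) (le_trans hd'd hdb) hw'⟩
  · -- d' < m last ≤ d, contradicting minimality of d
    have : WindowHasOcc E n α c d' := windowHasOcc_mono hcc' (le_refl _) hw'
    exact Nat.find_min hQex (lt_of_lt_of_le hp hmd) this

/-- Lex-before plus non-overlapped means ends strictly before. -/
lemma lex_nonOverlapped {N : ℕ} {h1 h2 : Fin (N+1) → ℕ}
    (hm1 : Monotone h1) (hm2 : Monotone h2)
    (hl : OccLex h1 h2) (hno : NonOverlapped h1 h2) :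
    h1 (Fin.last N) < h2 0 := by
  rcases hno with hno | hno
  · exact hno
  · exfalso
    obtain ⟨i, _, hlt⟩ := hl
    have : h2 i < h1 i :=
      lt_of_le_of_lt (hm2 (Fin.le_last i)) (lt_of_lt_of_le hno (hm1 (Fin.zero_le i)))
    exact absurd hlt (not_lt.mpr (le_of_lt this))

end Aux

theorem stmt11 (E : ℕ → A) (n : ℕ) {N : ℕ} (α : Fin (N+1) → A)
    (t : ℕ → ℕ) (ht : StrictMono t) (TX f : ℕ) (h : ℕ → Fin (N+1) → ℕ)
    (hg : GreedyMin E n α t TX f h)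
    (l : ℕ) (h' : ℕ → Fin (N+1) → ℕ)
    (hocc' : ∀ i < l, IsOcc E n α (h' i) ∧ SpanLe t (h' i) TX)
    (hlex' : ∀ i j, i < j → j < l → OccLex (h' i) (h' j))
    (hno' : ∀ i j, i < j → j < l → NonOverlapped (h' i) (h' j)) :
    ∀ i, i < f → i < l → h i (Fin.last N) ≤ h' i (Fin.last N) := by
  obtain ⟨hgmem, hg0, hgstep⟩ := hg
  -- key step: from an occurrence with span ≤ TX, extract a minimal occurrence
  -- inside it, which also has span ≤ TX
  have key : ∀ i, i < l → ∃ m, IsMinOcc E n α m ∧ SpanLe t m TX ∧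
      h' i 0 ≤ m 0 ∧ m (Fin.last N) ≤ h' i (Fin.last N) := by
    intro i hil
    obtain ⟨hocc, hspan⟩ := hocc' i hil
    obtain ⟨m, hm, hm0, hmN⟩ := exists_minOcc_within hocc
    refine ⟨m, hm, ?_, hm0, hmN⟩
    have h1 : t (m (Fin.last N)) ≤ t (h' i (Fin.last N)) := ht.monotone hmN
    have h2 : t (h' i 0) ≤ t (m 0) := ht.monotone hm0
    exact le_trans (le_trans (Nat.sub_le_sub_right h1 _) (Nat.sub_le_sub_left h2 _)) hspan
  have dominate : ∀ i, i < f → ∀ m, IsMinOcc E n α m → ¬ OccLex m (h i) →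
      h i (Fin.last N) ≤ m (Fin.last N) := by
    intro i hif m hm hnl
    rcases occLex_trichotomy (h i) m with hlex | heq | hlex
    · exact minOcc_last_le (hgmem i hif).1 hm.1 (occLex_zero_le hlex)
    · rw [heq]
    · exact absurd hlex hnl
  intro i
  induction i with
  | zero =>
    intro h0f h0l
    obtain ⟨m, hm, hms, hm0, hmN⟩ := key 0 h0l
    have hnl := hg0 h0f m hm hms
    exact le_trans (dominate 0 h0f m hm hnl) hmN
  | succ i ih =>
    intro hif hil
    have hif' : i < f := Nat.lt_of_succ_lt hif
    have hil' : i < l := Nat.lt_of_succ_lt hil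
    have hihi : h i (Fin.last N) ≤ h' i (Fin.last N) := ih hif' hil'
    obtain ⟨m, hm, hms, hm0, hmN⟩ := key (i+1) hil
    have hocci := (hocc' i hil').1
    have hocci1 := (hocc' (i+1) hil).1
    have hsep : h' i (Fin.last N) < h' (i+1) 0 :=
      lex_nonOverlapped hocci.1.monotone hocci1.1.monotone
        (hlex' i (i+1) (Nat.lt_succ_self i) hil)
        (hno' i (i+1) (Nat.lt_succ_self i) hil)
    have hstart : h i (Fin.last N) < m 0 :=
      lt_of_le_of_lt hihi (lt_of_lt_of_le hsep hm0)
    have hnl := (hgstep i hif).2 m hm hms hstart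
    exact le_trans (dominate (i+1) hif m hm hnl) hmN
end

section
/- If {h_1, ..., h_f} is a pairwise non-interleaved set of occurrences of an N-node serial episode α, then the restrictions h'_k = (h_k(v_1), ..., h_k(v_{N−1})), which are occurrences of the prefix subepisode α_p = α[1]→...→α[N−1], form a pairwise non-interleaved set of f occurrences of α_p; similarly for the suffix subepisode. Hence f_ni(α_p) ≥ f_ni(α) and f_ni(α_s) ≥ f_ni(α). -/
/-! Cutting the last (or first) node off every occurrence keeps occurrences and keeps
non-interleavedness. It also keeps distinct occurrences distinct: if `h₁ <⋆ h₂` then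
`h₁ i < h₂ i` at every node, so the restrictions still differ at their first node. -/

variable {A : Type}

variable {E : ℕ → A} {n : ℕ}

namespace IsOcc

theorem init {N : ℕ} {α : Fin (N+2) → A} {h : Fin (N+2) → ℕ} (hh : IsOcc E n α h) :
    IsOcc E n (Fin.init α) (Fin.init h) :=
  ⟨hh.1.comp Fin.strictMono_castSucc, fun _ => hh.2.1 _, fun _ => hh.2.2 _⟩

theorem tail {N : ℕ} {α : Fin (N+2) → A} {h : Fin (N+2) → ℕ} (hh : IsOcc E n α h) :
    IsOcc E n (Fin.tail α) (Fin.tail h) :=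
  ⟨hh.1.comp Fin.strictMono_succ, fun _ => hh.2.1 _, fun _ => hh.2.2 _⟩

end IsOcc

namespace NonInterleaved

variable {N : ℕ} {h₁ h₂ : Fin (N+2) → ℕ}

theorem init (h : NonInterleaved h₁ h₂) : NonInterleaved (Fin.init h₁) (Fin.init h₂) :=
  fun i => h i.castSucc

theorem tail (h : NonInterleaved h₁ h₂) : NonInterleaved (Fin.tail h₁) (Fin.tail h₂) :=
  fun i => h i.succ

theorem lt_apply (hm₁ : StrictMono h₁) (hm₂ : StrictMono h₂) (h : NonInterleaved h₁ h₂)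
    (i : Fin (N+2)) : h₁ i < h₂ i := by
  rcases Fin.eq_castSucc_or_eq_last i with ⟨j, rfl⟩ | rfl
  · exact (hm₁ j.castSucc_lt_succ).trans_le (h j)
  · calc h₁ (Fin.last (N+1)) ≤ h₂ (Fin.last N).castSucc := h (Fin.last N)
      _ < h₂ (Fin.last (N+1)) := hm₂ (Fin.castSucc_lt_last _)

end NonInterleaved

section Restriction

variable {N : ℕ} {S : Set (Fin (N+2) → ℕ)}

theorem injOn_eval_of_pairwise_nonInterleaved (hmono : ∀ h ∈ S, StrictMono h)
    (hni : S.Pairwise (fun a b => NonInterleaved a b ∨ NonInterleaved b a)) (i : Fin (N+2)) :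
    S.InjOn (fun h => h i) := by
  intro a ha b hb hab
  by_contra hne
  rcases hni ha hb hne with h | h
  · exact (h.lt_apply (hmono a ha) (hmono b hb) i).ne hab
  · exact (h.lt_apply (hmono b hb) (hmono a ha) i).ne' hab

theorem injOn_init_of_pairwise_nonInterleaved (hmono : ∀ h ∈ S, StrictMono h)
    (hni : S.Pairwise (fun a b => NonInterleaved a b ∨ NonInterleaved b a)) :
    S.InjOn Fin.init :=
  Set.InjOn.of_comp (g := fun g : Fin (N+1) → ℕ => g 0)
    (injOn_eval_of_pairwise_nonInterleaved hmono hni _)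

theorem injOn_tail_of_pairwise_nonInterleaved (hmono : ∀ h ∈ S, StrictMono h)
    (hni : S.Pairwise (fun a b => NonInterleaved a b ∨ NonInterleaved b a)) :
    S.InjOn Fin.tail :=
  Set.InjOn.of_comp (g := fun g : Fin (N+1) → ℕ => g 0)
    (injOn_eval_of_pairwise_nonInterleaved hmono hni _)

end Restriction

theorem Set.Pairwise.image_nonInterleaved {M K : ℕ} {S : Set (Fin (M+1) → ℕ)}
    {F : (Fin (M+1) → ℕ) → Fin (K+1) → ℕ}
    (hF : ∀ a b, NonInterleaved a b → NonInterleaved (F a) (F b))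
    (hni : S.Pairwise (fun a b => NonInterleaved a b ∨ NonInterleaved b a)) :
    (F '' S).Pairwise (fun a b => NonInterleaved a b ∨ NonInterleaved b a) := by
  rintro _ ⟨a, ha, rfl⟩ _ ⟨b, hb, rfl⟩ hab
  exact (hni ha hb (ne_of_apply_ne F hab)).imp (hF a b) (hF b a)

section Frequency

variable {N : ℕ} {α : Fin (N+1) → A}

theorem ncard_le_fni {S : Set (Fin (N+1) → ℕ)} (hocc : ∀ h ∈ S, IsOcc E n α h)
    (hni : S.Pairwise (fun a b => NonInterleaved a b ∨ NonInterleaved b a)) :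
    S.ncard ≤ fni E n α := by
  obtain ⟨box, hbox_fin, hbox⟩ : ∃ B : Set (Fin (N+1) → ℕ), B.Finite ∧
      ∀ T : Set (Fin (N+1) → ℕ), (∀ h ∈ T, IsOcc E n α h) → T ⊆ B :=
    ⟨_, Set.Finite.pi fun _ => Set.finite_Iio n, fun T hT h hh i _ => (hT h hh).2.1 i⟩
  refine le_csSup ⟨box.ncard, ?_⟩ ⟨S, hbox_fin.subset (hbox S hocc), rfl, hocc, hni⟩
  rintro _ ⟨T, -, rfl, hTocc, -⟩
  exact Set.ncard_le_ncard (hbox T hTocc) hbox_fin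

theorem fni_le {k : ℕ}
    (hk : ∀ S : Set (Fin (N+1) → ℕ), S.Finite → (∀ h ∈ S, IsOcc E n α h) →
      S.Pairwise (fun a b => NonInterleaved a b ∨ NonInterleaved b a) → S.ncard ≤ k) :
    fni E n α ≤ k := by
  refine csSup_le ⟨0, ∅, Set.finite_empty, Set.ncard_empty _, by simp, Set.pairwise_empty _⟩ ?_
  rintro _ ⟨S, hS, rfl, hocc, hni⟩
  exact hk S hS hocc hni

theorem fni_le_fni_of_map {K : ℕ} {β : Fin (K+1) → A} (F : (Fin (N+1) → ℕ) → Fin (K+1) → ℕ)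
    (hocc : ∀ h, IsOcc E n α h → IsOcc E n β (F h))
    (hni : ∀ a b, NonInterleaved a b → NonInterleaved (F a) (F b))
    (hinj : ∀ S : Set (Fin (N+1) → ℕ), (∀ h ∈ S, IsOcc E n α h) →
      S.Pairwise (fun a b => NonInterleaved a b ∨ NonInterleaved b a) → S.InjOn F) :
    fni E n α ≤ fni E n β :=
  fni_le fun S _ hS hSni => by
    rw [← (hinj S hS hSni).ncard_image]
    exact ncard_le_fni (Set.forall_mem_image.2 fun h hh => hocc h (hS h hh))
      (hSni.image_nonInterleaved hni)

end Frequency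

theorem stmt15_general (E : ℕ → A) (n : ℕ) {N : ℕ} (α : Fin (N+2) → A)
    (S : Set (Fin (N+2) → ℕ))
    (hocc : ∀ h ∈ S, IsOcc E n α h)
    (hni : S.Pairwise (fun a b => NonInterleaved a b ∨ NonInterleaved b a)) :
    (∀ g ∈ (fun (h : Fin (N+2) → ℕ) (i : Fin (N+1)) => h i.castSucc) '' S,
        IsOcc E n (fun i : Fin (N+1) => α i.castSucc) g) ∧
    ((fun (h : Fin (N+2) → ℕ) (i : Fin (N+1)) => h i.castSucc) '' S).Pairwise
        (fun a b => NonInterleaved a b ∨ NonInterleaved b a) ∧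
    ((fun (h : Fin (N+2) → ℕ) (i : Fin (N+1)) => h i.castSucc) '' S).ncard = S.ncard ∧
    (∀ g ∈ (fun (h : Fin (N+2) → ℕ) (i : Fin (N+1)) => h i.succ) '' S,
        IsOcc E n (fun i : Fin (N+1) => α i.succ) g) ∧
    ((fun (h : Fin (N+2) → ℕ) (i : Fin (N+1)) => h i.succ) '' S).Pairwise
        (fun a b => NonInterleaved a b ∨ NonInterleaved b a) ∧
    ((fun (h : Fin (N+2) → ℕ) (i : Fin (N+1)) => h i.succ) '' S).ncard = S.ncard ∧
    fni E n α ≤ fni E n (fun i : Fin (N+1) => α i.castSucc) ∧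
    fni E n α ≤ fni E n (fun i : Fin (N+1) => α i.succ) := by
  have hmono {T : Set (Fin (N+2) → ℕ)} (hT : ∀ h ∈ T, IsOcc E n α h) :
      ∀ h ∈ T, StrictMono h := fun h hh => (hT h hh).1
  exact ⟨Set.forall_mem_image.2 fun h hh => (hocc h hh).init,
    hni.image_nonInterleaved fun _ _ => NonInterleaved.init,
    (injOn_init_of_pairwise_nonInterleaved (hmono hocc) hni).ncard_image,
    Set.forall_mem_image.2 fun h hh => (hocc h hh).tail,
    hni.image_nonInterleaved fun _ _ => NonInterleaved.tail,
    (injOn_tail_of_pairwise_nonInterleaved (hmono hocc) hni).ncard_image,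
    fni_le_fni_of_map Fin.init (fun _ => IsOcc.init) (fun _ _ => NonInterleaved.init)
      fun _ hT hTni => injOn_init_of_pairwise_nonInterleaved (hmono hT) hTni,
    fni_le_fni_of_map Fin.tail (fun _ => IsOcc.tail) (fun _ _ => NonInterleaved.tail)
      fun _ hT hTni => injOn_tail_of_pairwise_nonInterleaved (hmono hT) hTni⟩

theorem stmt15 (E : ℕ → A) (n : ℕ) {N : ℕ} (α : Fin (N+2) → A)
    (S : Set (Fin (N+2) → ℕ)) (hfin : S.Finite)
    (hocc : ∀ h ∈ S, IsOcc E n α h)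
    (hni : S.Pairwise (fun a b => NonInterleaved a b ∨ NonInterleaved b a)) :
    (∀ g ∈ (fun (h : Fin (N+2) → ℕ) (i : Fin (N+1)) => h i.castSucc) '' S,
        IsOcc E n (fun i : Fin (N+1) => α i.castSucc) g) ∧
    ((fun (h : Fin (N+2) → ℕ) (i : Fin (N+1)) => h i.castSucc) '' S).Pairwise
        (fun a b => NonInterleaved a b ∨ NonInterleaved b a) ∧
    ((fun (h : Fin (N+2) → ℕ) (i : Fin (N+1)) => h i.castSucc) '' S).ncard = S.ncard ∧
    (∀ g ∈ (fun (h : Fin (N+2) → ℕ) (i : Fin (N+1)) => h i.succ) '' S,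
        IsOcc E n (fun i : Fin (N+1) => α i.succ) g) ∧
    ((fun (h : Fin (N+2) → ℕ) (i : Fin (N+1)) => h i.succ) '' S).Pairwise
        (fun a b => NonInterleaved a b ∨ NonInterleaved b a) ∧
    ((fun (h : Fin (N+2) → ℕ) (i : Fin (N+1)) => h i.succ) '' S).ncard = S.ncard ∧
    fni E n α ≤ fni E n (fun i : Fin (N+1) => α i.castSucc) ∧
    fni E n α ≤ fni E n (fun i : Fin (N+1) => α i.succ) :=
  stmt15_general E n α S hocc hni
end

section
/- The head frequency of a serial episode with window-width k exceeding the total time span of the event sequence equals the number of earliest transiting occurrences of the episode, which equals the number of distinct indices at which an occurrence of the episode starts. -/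
variable {A : Type}

/-!
Fix the starting index `a` of an occurrence. Choosing each subsequent event greedily, as the
earliest one after its predecessor, yields an earliest transiting occurrence that starts at `a`
(the greedy choice never overtakes the given occurrence), and the greedy choice is forced, so
earliest transiting occurrences correspond bijectively to starting indices. When the window
width exceeds the whole time span, the window condition in the head frequency is vacuous and,
`t` being injective, the head frequency counts the starting indices as well.
-/

section EarliestTransiting

variable {E : ℕ → A} {n N : ℕ} {α : Fin (N+1) → A}

/-- Junk (via `sInf ∅ = 0`) unless some occurrence of `α` starts at `a`. -/
noncomputable def greedyOcc (E : ℕ → A) (α : Fin (N+1) → A) (a : ℕ) : Fin (N+1) → ℕ :=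
  Fin.induction a fun i x => sInf {j | x < j ∧ E j = α i.succ}

lemma greedyOcc_succ (E : ℕ → A) (α : Fin (N+1) → A) (a : ℕ) (i : Fin N) :
    greedyOcc E α a i.succ = sInf {j | greedyOcc E α a i.castSucc < j ∧ E j = α i.succ} :=
  rfl

lemma IsOcc.greedyOcc_le {h : Fin (N+1) → ℕ} (hh : IsOcc E n α h) (i : Fin (N+1)) :
    greedyOcc E α (h 0) i ≤ h i := by
  induction i using Fin.induction with
  | zero => rfl
  | succ i ih =>
    rw [greedyOcc_succ]
    exact Nat.sInf_le ⟨ih.trans_lt (hh.1 i.castSucc_lt_succ), hh.2.2 i.succ⟩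

lemma IsOcc.greedyOcc_succ_mem {h : Fin (N+1) → ℕ} (hh : IsOcc E n α h) (i : Fin N) :
    greedyOcc E α (h 0) i.succ ∈
      {j | greedyOcc E α (h 0) i.castSucc < j ∧ E j = α i.succ} :=
  Nat.sInf_mem
    ⟨h i.succ, (hh.greedyOcc_le i.castSucc).trans_lt (hh.1 i.castSucc_lt_succ), hh.2.2 i.succ⟩

lemma IsOcc.isET_greedyOcc {h : Fin (N+1) → ℕ} (hh : IsOcc E n α h) :
    IsET E n α (greedyOcc E α (h 0)) := by
  refine ⟨⟨?_, fun i => (hh.greedyOcc_le i).trans_lt (hh.2.1 i), ?_⟩, ?_⟩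
  · exact Fin.strictMono_iff_lt_succ.2 fun i => (hh.greedyOcc_succ_mem i).1
  · intro i
    cases i using Fin.cases with
    | zero => exact hh.2.2 0
    | succ i => exact (hh.greedyOcc_succ_mem i).2
  · intro i j hj hEj
    rw [greedyOcc_succ]
    exact Nat.sInf_le ⟨hj, hEj⟩

lemma IsET.eq_of_apply_zero_eq {h g : Fin (N+1) → ℕ} (hh : IsET E n α h) (hg : IsET E n α g)
    (h0 : h 0 = g 0) : h = g := by
  funext i
  induction i using Fin.induction with
  | zero => exact h0
  | succ i ih =>
    refine le_antisymm (hh.2 i _ ?_ (hg.1.2.2 i.succ)) (hg.2 i _ ?_ (hh.1.2.2 i.succ))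
    · exact ih ▸ hg.1.1 i.castSucc_lt_succ
    · exact ih ▸ hh.1.1 i.castSucc_lt_succ

lemma image_apply_zero_setOf_isET :
    (fun h : Fin (N+1) → ℕ => h 0) '' {h | IsET E n α h} =
      {i | ∃ h, IsOcc E n α h ∧ h 0 = i} := by
  ext i
  constructor
  · rintro ⟨h, hh, rfl⟩
    exact ⟨h, hh.1, rfl⟩
  · rintro ⟨h, hh, rfl⟩
    exact ⟨_, hh.isET_greedyOcc, rfl⟩

lemma ncard_setOf_isET :
    {h | IsET E n α h}.ncard = {i | ∃ h, IsOcc E n α h ∧ h 0 = i}.ncard := by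
  rw [← image_apply_zero_setOf_isET, Set.InjOn.ncard_image]
  exact fun h hh g hg => hh.eq_of_apply_zero_eq hg

end EarliestTransiting

lemma IsOcc.time_last_le {E : ℕ → A} {n N : ℕ} {α : Fin (N+1) → A} {h : Fin (N+1) → ℕ}
    (hh : IsOcc E n α h) {t : ℕ → ℕ} (ht : Monotone t) {k : ℕ} (hk : t (n-1) - t 0 < k) :
    t (h (Fin.last N)) ≤ t (h 0) + k := by
  have hlast : t (h (Fin.last N)) ≤ t (n-1) := ht (Nat.le_sub_one_of_lt (hh.2.1 _))
  have hfirst : t 0 ≤ t (h 0) := ht (Nat.zero_le _)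
  omega

theorem stmt16_general (E : ℕ → A) (n : ℕ) {N : ℕ} (α : Fin (N+1) → A)
    (t : ℕ → ℕ) (ht : StrictMono t) (k : ℕ) (hk : t (n-1) - t 0 < k) :
    {s : ℕ | ∃ h, IsOcc E n α h ∧ t (h 0) = s ∧
        t (h (Fin.last N)) ≤ s + k}.ncard = {h | IsET E n α h}.ncard ∧
    {h | IsET E n α h}.ncard =
      {i : ℕ | ∃ h, IsOcc E n α h ∧ h 0 = i}.ncard := by
  have hhead : {s : ℕ | ∃ h, IsOcc E n α h ∧ t (h 0) = s ∧ t (h (Fin.last N)) ≤ s + k} =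
      t '' {i : ℕ | ∃ h, IsOcc E n α h ∧ h 0 = i} := by
    ext s
    constructor
    · rintro ⟨h, hh, rfl, -⟩
      exact ⟨h 0, ⟨h, hh, rfl⟩, rfl⟩
    · rintro ⟨_, ⟨h, hh, rfl⟩, rfl⟩
      exact ⟨h, hh, rfl, hh.time_last_le ht.monotone hk⟩
  rw [hhead, Set.ncard_image_of_injective _ ht.injective, ncard_setOf_isET]
  exact ⟨rfl, rfl⟩

theorem stmt16 (E : ℕ → A) (n : ℕ) (hn : 0 < n) {N : ℕ} (α : Fin (N+1) → A)
    (t : ℕ → ℕ) (ht : StrictMono t) (k : ℕ) (hk : t (n-1) - t 0 < k) :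
    {s : ℕ | ∃ h, IsOcc E n α h ∧ t (h 0) = s ∧
        t (h (Fin.last N)) ≤ s + k}.ncard = {h | IsET E n α h}.ncard ∧
    {h | IsET E n α h}.ncard =
      {i : ℕ | ∃ h, IsOcc E n α h ∧ h 0 = i}.ncard :=
  stmt16_general E n α t ht k hk
end

section
/- For every starting index i at which some occurrence of a serial episode α begins, there is exactly one earliest transiting occurrence of α beginning at i, and it satisfies h^e(v_j) ≤ h(v_j) for all j and every occurrence h of α with h(v_1) = i. -/
variable {A : Type}

/-!
The earliest transiting occurrence starting at `i` is forced: its first index is `i` and each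
later index is the least position after the previous one carrying the next event-type. So it is
unique, and it exists as soon as some occurrence starts at `i`, since that occurrence keeps every
one of these "least position after" sets nonempty. By induction along the episode, the forced
indices stay below those of any occurrence starting at `i`.
-/

/-- The least index after `k` carrying event-type `a` (junk value `0` if there is none). -/
noncomputable def nextIdx (E : ℕ → A) (a : A) (k : ℕ) : ℕ :=
  sInf {j | k < j ∧ E j = a}

theorem nextIdx_le {E : ℕ → A} {a : A} {k j : ℕ} (hkj : k < j) (hj : E j = a) :
    nextIdx E a k ≤ j :=
  Nat.sInf_le (s := {j | k < j ∧ E j = a}) ⟨hkj, hj⟩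

theorem nextIdx_spec {E : ℕ → A} {a : A} {k j : ℕ} (hkj : k < j) (hj : E j = a) :
    k < nextIdx E a k ∧ E (nextIdx E a k) = a :=
  Nat.sInf_mem (s := {j | k < j ∧ E j = a}) ⟨j, hkj, hj⟩

noncomputable def earliestTransiting (E : ℕ → A) {N : ℕ} (α : Fin (N+1) → A) (i : ℕ) :
    Fin (N+1) → ℕ :=
  Fin.induction i fun k prev => nextIdx E (α k.succ) prev

theorem earliestTransiting_succ (E : ℕ → A) {N : ℕ} (α : Fin (N+1) → A) (i : ℕ) (k : Fin N) :
    earliestTransiting E α i k.succ =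
      nextIdx E (α k.succ) (earliestTransiting E α i k.castSucc) :=
  Fin.induction_succ _ _ _

theorem IsET.succ_eq_nextIdx {E : ℕ → A} {n N : ℕ} {α : Fin (N+1) → A} {he : Fin (N+1) → ℕ}
    (het : IsET E n α he) (k : Fin N) :
    he k.succ = nextIdx E (α k.succ) (he k.castSucc) :=
  (IsLeast.csInf_eq (s := {j | he k.castSucc < j ∧ E j = α k.succ})
    ⟨⟨het.1.1 Fin.castSucc_lt_succ, het.1.2.2 k.succ⟩, fun j hj => het.2 k j hj.1 hj.2⟩).symm

theorem IsET.eq_earliestTransiting {E : ℕ → A} {n N : ℕ} {α : Fin (N+1) → A}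
    {he : Fin (N+1) → ℕ} (het : IsET E n α he) :
    he = earliestTransiting E α (he 0) := by
  funext j
  induction j using Fin.induction with
  | zero => rfl
  | succ k ih => rw [het.succ_eq_nextIdx, earliestTransiting_succ, ih]

theorem earliestTransiting_le {E : ℕ → A} {n N : ℕ} {α : Fin (N+1) → A} {h : Fin (N+1) → ℕ}
    (hocc : IsOcc E n α h) {i : ℕ} (hi : i ≤ h 0) (j : Fin (N+1)) :
    earliestTransiting E α i j ≤ h j := by
  induction j using Fin.induction with
  | zero => exact hi
  | succ k ih =>
    rw [earliestTransiting_succ]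
    exact nextIdx_le (ih.trans_lt (hocc.1 Fin.castSucc_lt_succ)) (hocc.2.2 k.succ)

theorem isET_earliestTransiting {E : ℕ → A} {n N : ℕ} {α : Fin (N+1) → A}
    {h : Fin (N+1) → ℕ} (hocc : IsOcc E n α h) :
    IsET E n α (earliestTransiting E α (h 0)) := by
  have hspec (k : Fin N) :
      earliestTransiting E α (h 0) k.castSucc < earliestTransiting E α (h 0) k.succ ∧
        E (earliestTransiting E α (h 0) k.succ) = α k.succ := by
    rw [earliestTransiting_succ]
    refine nextIdx_spec ?_ (hocc.2.2 k.succ)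
    exact (earliestTransiting_le hocc le_rfl k.castSucc).trans_lt (hocc.1 Fin.castSucc_lt_succ)
  refine ⟨⟨?_, fun j => (earliestTransiting_le hocc le_rfl j).trans_lt (hocc.2.1 j), ?_⟩, ?_⟩
  · exact Fin.strictMono_iff_lt_succ.2 fun k => (hspec k).1
  · intro j
    induction j using Fin.cases with
    | zero => exact hocc.2.2 0
    | succ k => exact (hspec k).2
  · intro k j hkj hj
    rw [earliestTransiting_succ]
    exact nextIdx_le hkj hj

theorem stmt17 (E : ℕ → A) (n : ℕ) {N : ℕ} (α : Fin (N+1) → A) (i : ℕ)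
    (hstart : ∃ h, IsOcc E n α h ∧ h 0 = i) :
    (∃! he : Fin (N+1) → ℕ, IsET E n α he ∧ he 0 = i) ∧
    ∀ he, IsET E n α he → he 0 = i →
      ∀ h, IsOcc E n α h → h 0 = i → ∀ j, he j ≤ h j := by
  obtain ⟨h, hocc, rfl⟩ := hstart
  have het_eq (he : Fin (N+1) → ℕ) (het : IsET E n α he) (he0 : he 0 = h 0) :
      he = earliestTransiting E α (h 0) := by
    rw [het.eq_earliestTransiting, he0]
  refine ⟨⟨_, ⟨isET_earliestTransiting hocc, rfl⟩, fun he hhe => het_eq he hhe.1 hhe.2⟩, ?_⟩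
  intro he het he0 g hg hg0
  rw [het_eq he het he0]
  exact earliestTransiting_le hg hg0.ge
end
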